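/- arXiv:0901.4640 — 2 statements merged into one kernel-verified Lean document; each statement's English description precedes it below -/
import Mathlib

section
/- Let (Σ,σ) be a primitive Markov subshift on a countable alphabet. Suppose the uniformly continuous potential A : Σ → ℝ is bounded above and verifies inf A|_{⋃_{i∈F}[i]} > −∞. Then β_A = inf_{f ∈ C⁰(Σ)} sup_{x∈Σ} (A + f − f∘σ)(x), where the infimum is over all continuous real-valued functions f on Σ. -/
open MeasureTheory Filter Topology Set

/-- Membership in the Markov shift: admissible transitions at every coordinate. -/
def InShift (M : ℕ → ℕ → Bool) (x : ℕ → ℕ) : Prop := ∀ j, M (x j) (x (j+1)) = true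

/-- The one-sided countable Markov shift `Σ` associated to the transition matrix `M`,
as a subtype of `ℕ → ℕ` (with the product topology, which is the topology induced by
the metric `d(x,y) = λ^{min{j : x_j ≠ y_j}}`). -/
abbrev ShiftSpace (M : ℕ → ℕ → Bool) := {x : ℕ → ℕ // InShift M x}

/-- The left shift map `σ`. -/
def shiftMap (M : ℕ → ℕ → Bool) (x : ShiftSpace M) : ShiftSpace M :=
  ⟨fun j => x.1 (j+1), fun j => x.2 (j+1)⟩

/-- `Agree M k x y` means the points `x, y` coincide on the first `k` coordinates;
for `k ≥ 1` this is exactly `d(x,y) ≤ λ^k` for the metric of the paper. -/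
def Agree (M : ℕ → ℕ → Bool) (k : ℕ) (x y : ShiftSpace M) : Prop :=
  ∀ j < k, x.1 j = y.1 j

/-- The sets `B_n` of symbols admitting admissible words of length `n+1` starting at them. -/
def BSet (M : ℕ → ℕ → Bool) : ℕ → Set ℕ
  | 0 => {i | ∃ j, M i j = true}
  | n+1 => {i | ∃ j ∈ BSet M n, M i j = true}

/-- `⋂_{n ≥ 0} B_n`. -/
def BInf (M : ℕ → ℕ → Bool) : Set ℕ := ⋂ n, BSet M n

/-- `M` is primitive with connecting set `F` and connection length `K₀`: any two symbols
of `⋂ B_n` can be joined by an admissible word of length `K₀` with all letters in `F`. -/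
def Primitive (M : ℕ → ℕ → Bool) (F : Set ℕ) (K₀ : ℕ) : Prop :=
  ∀ i ∈ BInf M, ∀ j ∈ BInf M, ∃ p : ℕ → ℕ,
    p 0 = i ∧ p (K₀ + 1) = j ∧ (∀ t, 1 ≤ t → t ≤ K₀ → p t ∈ F) ∧
    (∀ t ≤ K₀, M (p t) (p (t+1)) = true)

/-- `A` is locally Hölder continuous with constant `H`:
`Var_k(A) ≤ H ⬝ λ^k` for every `k ≥ 1`. -/
def LocHolder (M : ℕ → ℕ → Bool) (lam H : ℝ) (A : ShiftSpace M → ℝ) : Prop :=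
  ∀ k : ℕ, 1 ≤ k → ∀ x y : ShiftSpace M, Agree M k x y → A x - A y ≤ H * lam ^ k

/-- `A` is coercive: `sup A|_{[i]} → -∞` as `i → ∞`. -/
def Coercive (M : ℕ → ℕ → Bool) (A : ShiftSpace M → ℝ) : Prop :=
  ∀ C : ℝ, ∃ N : ℕ, ∀ i : ℕ, N ≤ i → ∀ x : ShiftSpace M, x.1 0 = i → A x ≤ C

/-- The union of cylinders `⋃_{i ∈ F} [i]`. -/
def FCyl (M : ℕ → ℕ → Bool) (F : Set ℕ) : Set (ShiftSpace M) := {x | x.1 0 ∈ F}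

/-- `μ` is a `σ`-invariant Borel probability measure. -/
def InvProb (M : ℕ → ℕ → Bool) (μ : Measure (ShiftSpace M)) : Prop :=
  IsProbabilityMeasure μ ∧ μ.map (shiftMap M) = μ

/-- The ergodic maximizing value `β_A = sup {∫ A dμ : μ ∈ M_σ}`. -/
noncomputable def betaA (M : ℕ → ℕ → Bool) (A : ShiftSpace M → ℝ) : ℝ :=
  sSup {r | ∃ μ : Measure (ShiftSpace M), InvProb M μ ∧ Integrable A μ ∧ ∫ x, A x ∂μ = r}

/-- The compact subshift `Σ_I` on the finite alphabet `{0, …, I}`. -/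
def SpaceI (M : ℕ → ℕ → Bool) (I : ℕ) : Set (ShiftSpace M) := {x | ∀ j, x.1 j ≤ I}

/-- `β_A(I) = max {∫ A dμ : μ ∈ M_σ, supp μ ⊆ Σ_I}`. -/
noncomputable def betaAI (M : ℕ → ℕ → Bool) (A : ShiftSpace M → ℝ) (I : ℕ) : ℝ :=
  sSup {r | ∃ μ : Measure (ShiftSpace M), InvProb M μ ∧ μ (SpaceI M I) = 1 ∧
    Integrable A μ ∧ ∫ x, A x ∂μ = r}

/-- Birkhoff sum `S_k A`. -/
noncomputable def birkhoff (M : ℕ → ℕ → Bool) (A : ShiftSpace M → ℝ) (k : ℕ)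
    (x : ShiftSpace M) : ℝ :=
  ∑ j ∈ Finset.range k, A ((shiftMap M)^[j] x)

/-- The `k`-th variation `Var_k(A)`. -/
noncomputable def VarK (M : ℕ → ℕ → Bool) (A : ShiftSpace M → ℝ) (k : ℕ) : ℝ :=
  sSup {r | ∃ x y : ShiftSpace M, Agree M k x y ∧ A x - A y = r}

/-- `Var(A) = ∑_{k ≥ 1} Var_k(A)`. -/
noncomputable def VarSum (M : ℕ → ℕ → Bool) (A : ShiftSpace M → ℝ) : ℝ :=
  ∑' k : ℕ, VarK M A (k + 1)

/-- `sup A`. -/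
noncomputable def supA (M : ℕ → ℕ → Bool) (A : ShiftSpace M → ℝ) : ℝ :=
  sSup (Set.range A)

/-- `inf A|_{⋃_{i ∈ F} [i]}`. -/
noncomputable def infF (M : ℕ → ℕ → Bool) (F : Set ℕ) (A : ShiftSpace M → ℝ) : ℝ :=
  sInf (A '' FCyl M F)

/-- The defining set for `u_A(x)`: all values `S_k(A - β_A)(y)` with `σ^k(y) = x`. -/
noncomputable def uASet (M : ℕ → ℕ → Bool) (A : ShiftSpace M → ℝ) (x : ShiftSpace M) :
    Set ℝ :=
  {r | ∃ (k : ℕ) (y : ShiftSpace M), (shiftMap M)^[k] y = x ∧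
    birkhoff M A k y - k * betaA M A = r}

/-- The candidate minimal sub-action
`u_A(x) = sup {S_k(A - β_A)(y) : k ≥ 0, σ^k(y) = x}`. -/
noncomputable def uA (M : ℕ → ℕ → Bool) (A : ShiftSpace M → ℝ) (x : ShiftSpace M) : ℝ :=
  sSup (uASet M A x)

/-- The non-wandering set `Ω(A, I)` with respect to `A|_{Σ_I}`. -/
def NonWandering (M : ℕ → ℕ → Bool) (A : ShiftSpace M → ℝ) (I : ℕ) :
    Set (ShiftSpace M) :=
  {x | x ∈ SpaceI M I ∧ ∀ ε : ℝ, 0 < ε → ∀ m : ℕ,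
    ∃ y ∈ SpaceI M I, ∃ n : ℕ, 1 ≤ n ∧ Agree M m x y ∧
      Agree M m x ((shiftMap M)^[n] y) ∧
      |birkhoff M A n y - n * betaAI M A I| < ε}

/-!
`β_A ≤ c` whenever `A + f - f ∘ σ ≤ c` with `f` continuous: `A - c` is bounded by the coboundary
`f ∘ σ - f`, and although `f` need not be integrable, truncating it at `±K` gives bounded
coboundaries of integral zero, which converge to `A - c` dominatedly once capped by `A - c`.

Conversely, fix `ε > 0` and replace `A` by a potential `B ≥ A`, `B ≤ A + ε`, that depends only
on the first `n` symbols. Fix a point `v`. For `σᵏ y = x`, the word `y₀ ⋯ y_{k+n-1}` is closed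
into a periodic orbit that runs through the block `v₀ ⋯ v_{n-1}`, using connecting words of length
`K₀` with letters in `F`, where `A` is bounded below. Its Birkhoff sum is at most its length times
`β_A + ε`, and the anchor block splits the remaining terms into a part depending only on `x` and a
part depending only on `y₀ ⋯ y_{n-1}`. So `S_k(B - β_A - ε)(y)` plus the `y`-part is bounded in
terms of `x`, and its supremum over all such `(k, y)` is a locally constant sub-action for `B`.
-/

lemma min_sub_le_clamp_sub_clamp (K a b : ℝ) :
    min (b - a) 0 ≤ max (-K) (min K b) - max (-K) (min K a) := by
  simp only [max_def, min_def]
  split_ifs <;> linarith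

lemma clamp_eq_self {K t : ℝ} (h : |t| ≤ K) : max (-K) (min K t) = t := by
  rw [abs_le] at h
  rw [min_eq_right h.2, max_eq_right h.1]

lemma tendsto_clamp (t : ℝ) : Tendsto (fun K : ℕ => max (-(K : ℝ)) (min K t)) atTop (𝓝 t) :=
  tendsto_const_nhds.congr' <| (eventually_ge_atTop ⌈|t|⌉₊).mono fun _ hK =>
    (clamp_eq_self (Nat.ceil_le.1 hK)).symm

lemma MeasureTheory.MeasurePreserving.integral_comp_sub_eq_zero {X : Type*} [MeasurableSpace X]
    {μ : Measure X} {T : X → X} (hT : MeasurePreserving T μ μ) {g : X → ℝ} (hg : Integrable g μ) :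
    ∫ x, (g (T x) - g x) ∂μ = 0 := by
  rw [integral_sub (f := fun x => g (T x)) (hT.integrable_comp_of_integrable hg) hg,
    ← integral_map hT.measurable.aemeasurable (by rw [hT.map_eq]; exact hg.1), hT.map_eq,
    sub_self]

theorem integral_nonpos_of_le_coboundary {X : Type*} [MeasurableSpace X] {μ : Measure X}
    [IsFiniteMeasure μ] {T : X → X} (hT : MeasurePreserving T μ μ) {φ f : X → ℝ}
    (hφ : Integrable φ μ) (hf : Measurable f) (h : ∀ x, φ x ≤ f (T x) - f x) :
    ∫ x, φ x ∂μ ≤ 0 := by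
  set clamp : ℕ → X → ℝ := fun K x => max (-(K : ℝ)) (min K (f x))
  have hclamp_int : ∀ K, Integrable (clamp K) μ := fun K =>
    Integrable.of_bound (measurable_const.max (measurable_const.min hf)).aestronglyMeasurable K
      (Eventually.of_forall fun x => by
        simp only [clamp, Real.norm_eq_abs, abs_le]; constructor <;> simp)
  have hcob_int : ∀ K, Integrable (fun x => clamp K (T x) - clamp K x) μ := fun K =>
    (hT.integrable_comp_of_integrable (hclamp_int K)).sub (hclamp_int K)
  set g : ℕ → X → ℝ := fun K x => min (clamp K (T x) - clamp K x) (φ x)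
  have hg_meas : ∀ K, AEStronglyMeasurable (g K) μ := fun K => (hcob_int K).1.inf hφ.1
  have hg_abs : ∀ K x, ‖g K x‖ ≤ |φ x| := by
    intro K x
    have h₁ : -|φ x| ≤ min (φ x) 0 := le_min (neg_abs_le _) (by simp)
    have h₂ : min (φ x) 0 ≤ min (f (T x) - f x) 0 := min_le_min_right 0 (h x)
    have h₃ := min_sub_le_clamp_sub_clamp K (f x) (f (T x))
    rw [Real.norm_eq_abs, abs_le]
    exact ⟨le_min (by linarith) (neg_abs_le _), (min_le_right _ _).trans (le_abs_self _)⟩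
  have hg_int : ∀ K, ∫ x, g K x ∂μ ≤ 0 := fun K =>
    calc ∫ x, g K x ∂μ ≤ ∫ x, (clamp K (T x) - clamp K x) ∂μ :=
          integral_mono (hφ.abs.mono' (hg_meas K) (Eventually.of_forall (hg_abs K)))
            (hcob_int K) fun x => min_le_left _ _
      _ = 0 := hT.integral_comp_sub_eq_zero (hclamp_int K)
  have hg_lim : ∀ x, Tendsto (fun K => g K x) atTop (𝓝 (φ x)) := fun x => by
    have := ((tendsto_clamp (f (T x))).sub (tendsto_clamp (f x))).min
      (tendsto_const_nhds (x := φ x))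
    rwa [min_eq_right (h x)] at this
  exact le_of_tendsto' (tendsto_integral_of_dominated_convergence _ hg_meas hφ.abs
    (fun K => Eventually.of_forall (hg_abs K)) (Eventually.of_forall hg_lim)) hg_int

theorem List.IsChain.append_bridge {α : Type*} {R : α → α → Prop} {l₁ c l₂ : List α} {i j : α}
    (h₁ : l₁.IsChain R) (hi : l₁.getLast? = some i) (hc : (i :: c ++ [j]).IsChain R)
    (h₂ : l₂.IsChain R) (hj : l₂.head? = some j) : (l₁ ++ c ++ l₂).IsChain R := by
  obtain ⟨l₁, rfl⟩ : ∃ l, l₁ = l ++ [i] := ⟨l₁.dropLast, (List.dropLast_append_getLast? _ hi).symm⟩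
  obtain ⟨l₂, rfl⟩ : ∃ l, l₂ = j :: l := ⟨l₂.tail, (List.eq_cons_of_mem_head? hj)⟩
  have h := h₁.append_overlap (l₃ := c ++ [j]) (by simpa using hc) (by simp)
  have h' := (show (l₁ ++ [i] ++ c ++ [j]).IsChain R by simpa using h).append_overlap
    (l₃ := l₂) (l₂ := [j]) (by simpa using h₂) (by simp)
  simpa using h'

lemma List.rotate_eq_of_eq_append {α : Type*} {l l₁ l₂ : List α} {t : ℕ} (h : l = l₁ ++ l₂)
    (ht : l₁.length = t) : l.rotate t = l₂ ++ l₁ := by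
  rw [h, ← ht, List.rotate_append_length_eq]

section OrbitMeasure

open scoped ENNReal

variable {X : Type*} [MeasurableSpace X] (T : X → X) (z : X) (N : ℕ)

noncomputable def orbitMeasure : Measure X :=
  (N : ℝ≥0∞)⁻¹ • ∑ t ∈ Finset.range N, Measure.dirac (T^[t] z)

variable {N}

lemma isProbabilityMeasure_orbitMeasure (hN : N ≠ 0) :
    IsProbabilityMeasure (orbitMeasure T z N) := by
  constructor
  simp [orbitMeasure, Measure.finsetSum_apply, ENNReal.inv_mul_cancel (Nat.cast_ne_zero.2 hN)]

variable {T z}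

lemma map_orbitMeasure (hT : Measurable T) (hz : T^[N] z = z) :
    (orbitMeasure T z N).map T = orbitMeasure T z N := by
  rcases N with _ | N
  · simp [orbitMeasure]
  simp only [orbitMeasure, Measure.map_smul, Measure.map_finset_sum hT.aemeasurable,
    Measure.map_dirac' hT, ← Function.iterate_succ_apply' T]
  rw [Finset.sum_range_succ, Finset.sum_range_succ' (fun t => Measure.dirac (T^[t] z)), hz,
    Function.iterate_zero_apply]

variable [MeasurableSingletonClass X]

lemma integrable_orbitMeasure (hN : N ≠ 0) (g : X → ℝ) : Integrable g (orbitMeasure T z N) :=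
  (integrable_finsetSum_measure.2 fun _ _ => integrable_dirac enorm_lt_top).smul_measure
    (by simp [hN])

lemma integral_orbitMeasure (g : X → ℝ) :
    ∫ x, g x ∂(orbitMeasure T z N) = (N : ℝ)⁻¹ * ∑ t ∈ Finset.range N, g (T^[t] z) := by
  rw [orbitMeasure, integral_smul_measure,
    integral_finsetSum_measure fun _ _ => integrable_dirac enorm_lt_top]
  simp [integral_dirac]

end OrbitMeasure

section PreimageSup

variable {X : Type*} (T : X → X) (G w : X → ℝ)

def preimageSums (x : X) : Set ℝ :=
  {r | ∃ k y, T^[k] y = x ∧ ∑ t ∈ Finset.range k, G (T^[t] y) + w y = r}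

noncomputable def preimageSup (x : X) : ℝ := sSup (preimageSums T G w x)

lemma add_preimageSup_le (hbdd : ∀ x, BddAbove (preimageSums T G w x)) (x : X) :
    G x + preimageSup T G w x ≤ preimageSup T G w (T x) := by
  rw [add_comm, ← le_sub_iff_add_le]
  refine csSup_le ⟨w x, 0, x, rfl, by simp⟩ ?_
  rintro r ⟨k, y, rfl, rfl⟩
  rw [le_sub_iff_add_le]
  refine le_csSup (hbdd _) ⟨k + 1, y, Function.iterate_succ_apply' .., ?_⟩
  rw [Finset.sum_range_succ]; ring

end PreimageSup

variable {M : ℕ → ℕ → Bool}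

def Transition (M : ℕ → ℕ → Bool) (i j : ℕ) : Prop := M i j = true

lemma iterate_shiftMap_apply (t : ℕ) (x : ShiftSpace M) (j : ℕ) :
    ((shiftMap M)^[t] x).1 j = x.1 (j + t) := by
  induction t generalizing x with
  | zero => rfl
  | succ t ih => rw [Function.iterate_succ_apply, ih]; rfl

lemma measurable_shiftMap : Measurable (shiftMap M) := by
  apply Measurable.subtype_mk
  exact measurable_pi_iff.2 fun j => (measurable_pi_apply (j + 1)).comp measurable_subtype_coe

namespace Agree

lemma refl (k : ℕ) (x : ShiftSpace M) : Agree M k x x := fun _ _ => rfl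

lemma symm {k : ℕ} {x y : ShiftSpace M} (h : Agree M k x y) : Agree M k y x :=
  fun j hj => (h j hj).symm

lemma trans {k : ℕ} {x y z : ShiftSpace M} (h : Agree M k x y) (h' : Agree M k y z) :
    Agree M k x z :=
  fun j hj => (h j hj).trans (h' j hj)

lemma mono {k l : ℕ} {x y : ShiftSpace M} (h : Agree M k x y) (hlk : l ≤ k) : Agree M l x y :=
  fun j hj => h j (hj.trans_le hlk)

lemma iterate {k t : ℕ} {x y : ShiftSpace M} (h : Agree M (k + t) x y) :
    Agree M k ((shiftMap M)^[t] x) ((shiftMap M)^[t] y) := fun j hj => by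
  simpa only [iterate_shiftMap_apply] using h (j + t) (by omega)

end Agree

lemma isOpen_setOf_agree (n : ℕ) (x : ShiftSpace M) : IsOpen {y | Agree M n x y} := by
  have : {y | Agree M n x y} =
      ⋂ j ∈ Finset.range n, (fun y : ShiftSpace M => y.1 j) ⁻¹' {x.1 j} := by
    ext y; simp [Agree, eq_comm]
  rw [this]
  exact isOpen_biInter_finset fun j _ =>
    (isOpen_discrete _).preimage ((continuous_apply j).comp continuous_subtype_val)

lemma continuous_of_agree {X : Type*} [TopologicalSpace X] {n : ℕ} {g : ShiftSpace M → X}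
    (hg : ∀ x y, Agree M n x y → g x = g y) : Continuous g :=
  (IsLocallyConstant.iff_exists_open g).2 (fun x =>
    ⟨_, isOpen_setOf_agree n x, Agree.refl n x, fun y hy => (hg x y hy).symm⟩) |>.continuous

lemma symbol_mem_BInf (x : ShiftSpace M) (i : ℕ) : x.1 i ∈ BInf M := by
  refine Set.mem_iInter.2 fun n => ?_
  induction n generalizing i with
  | zero => exact ⟨_, x.2 i⟩
  | succ n ih => exact ⟨_, ih (i + 1), x.2 i⟩

def word (x : ShiftSpace M) (n : ℕ) : List ℕ := (List.range n).map x.1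

@[simp] lemma length_word (x : ShiftSpace M) (n : ℕ) : (word x n).length = n := by simp [word]

@[simp] lemma getElem_word (x : ShiftSpace M) {n j : ℕ} (hj : j < (word x n).length) :
    (word x n)[j] = x.1 j := by simp [word]

lemma word_add (x : ShiftSpace M) (k n : ℕ) :
    word x (k + n) = word x k ++ word ((shiftMap M)^[k] x) n := by
  simp [word, List.range_add, Function.comp_def, iterate_shiftMap_apply, add_comm]

lemma word_congr {n : ℕ} {x y : ShiftSpace M} (h : Agree M n x y) : word x n = word y n :=
  List.map_congr_left fun j hj => h j (List.mem_range.1 hj)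

lemma head?_word (x : ShiftSpace M) {n : ℕ} (hn : 0 < n) : (word x n).head? = some (x.1 0) := by
  obtain ⟨n, rfl⟩ := Nat.exists_eq_add_of_lt hn
  simp [word, List.range_succ_eq_map]

lemma getLast?_word (x : ShiftSpace M) {n : ℕ} (hn : 0 < n) :
    (word x n).getLast? = some (x.1 (n - 1)) := by
  obtain ⟨n, rfl⟩ := Nat.exists_eq_add_of_lt hn
  simp [word, List.range_succ]

lemma isChain_word (x : ShiftSpace M) (n : ℕ) : (word x n).IsChain (Transition M) :=
  (List.isChain_map _).2 ((List.isChain_range _ _).2 fun j _ => x.2 j)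

def cyclicSeq (l : List ℕ) (j : ℕ) : ℕ := l.getD (j % l.length) 0

lemma cyclicSeq_apply_of_lt {l : List ℕ} {j : ℕ} (hj : j < l.length) : cyclicSeq l j = l[j] := by
  rw [cyclicSeq, Nat.mod_eq_of_lt hj, List.getD_eq_getElem]

lemma cyclicSeq_rotate (l : List ℕ) (t j : ℕ) : cyclicSeq (l.rotate t) j = cyclicSeq l (j + t) := by
  by_cases hl : l = []
  · simp [hl, cyclicSeq]
  have hL : 0 < l.length := List.length_pos_of_ne_nil hl
  simp only [cyclicSeq, List.length_rotate]
  rw [List.getD_eq_getElem _ _ (by simpa using Nat.mod_lt j hL), List.getElem_rotate,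
    List.getD_eq_getElem _ _ (Nat.mod_lt _ hL)]
  simp [Nat.mod_add_mod]

lemma cyclicSeq_add_length (l : List ℕ) (j : ℕ) : cyclicSeq l (j + l.length) = cyclicSeq l j := by
  simp [cyclicSeq]

lemma cyclicSeq_mod (l : List ℕ) (j : ℕ) : cyclicSeq l (j % l.length) = cyclicSeq l j := by
  simp [cyclicSeq]

lemma inShift_cyclicSeq {l : List ℕ} (hl : l ≠ []) (h : (l ++ l.take 1).IsChain (Transition M)) :
    InShift M (cyclicSeq l) := by
  have hL : 0 < l.length := List.length_pos_of_ne_nil hl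
  intro j
  obtain ⟨i, hi, hij, hij'⟩ : ∃ i < l.length, cyclicSeq l j = cyclicSeq l i ∧
      cyclicSeq l (j + 1) = cyclicSeq l (i + 1) :=
    ⟨j % l.length, Nat.mod_lt j hL, (cyclicSeq_mod l j).symm, by
      rw [← cyclicSeq_mod l (j + 1), ← cyclicSeq_mod l (j % l.length + 1), Nat.mod_add_mod]⟩
  have hnext : (l ++ l.take 1)[i + 1]'(by simp; omega) = cyclicSeq l (i + 1) := by
    rcases Nat.lt_or_ge (i + 1) l.length with hi' | hi'
    · rw [List.getElem_append_left hi', cyclicSeq_apply_of_lt hi']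
    · have hwrap : cyclicSeq l (i + 1) = l[0] := by
        rw [show i + 1 = 0 + l.length by omega, cyclicSeq_add_length, cyclicSeq_apply_of_lt hL]
      rw [List.getElem_append_right hi', hwrap]
      simp only [List.getElem_take, show i + 1 - l.length = 0 by omega]
  have hstep := List.isChain_iff_getElem.1 h i (by simp; omega)
  rw [List.getElem_append_left hi, ← cyclicSeq_apply_of_lt hi, hnext] at hstep
  rw [hij, hij']
  exact hstep

lemma agree_of_isPrefix {x y : ShiftSpace M} {l l' p : List ℕ} (hx : x.1 = cyclicSeq l)
    (hy : y.1 = cyclicSeq l') (hl : p <+: l) (hl' : p <+: l') : Agree M p.length x y := by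
  intro j hj
  rw [hx, hy, cyclicSeq_apply_of_lt (hj.trans_le hl.length_le),
    cyclicSeq_apply_of_lt (hj.trans_le hl'.length_le), ← hl.getElem hj, ← hl'.getElem hj]

lemma iterate_shiftMap_coe_of_eq_cyclicSeq {x : ShiftSpace M} {l : List ℕ}
    (hx : x.1 = cyclicSeq l) (t : ℕ) : ((shiftMap M)^[t] x).1 = cyclicSeq (l.rotate t) := by
  funext j; rw [iterate_shiftMap_apply, hx, cyclicSeq_rotate]

lemma iterate_shiftMap_length_of_eq_cyclicSeq {x : ShiftSpace M} {l : List ℕ}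
    (hx : x.1 = cyclicSeq l) : (shiftMap M)^[l.length] x = x := by
  apply Subtype.ext
  rw [iterate_shiftMap_coe_of_eq_cyclicSeq hx, List.rotate_length, hx]

section Connector

variable {F : Set ℕ} {K₀ : ℕ}

lemma exists_connector (hprim : Primitive M F K₀) {i j : ℕ} (hi : i ∈ BInf M) (hj : j ∈ BInf M) :
    ∃ c : List ℕ, c.length = K₀ ∧ (∀ s ∈ c, s ∈ F) ∧ (i :: c ++ [j]).IsChain (Transition M) := by
  obtain ⟨p, hp0, hpK, hpF, hpM⟩ := hprim i hi j hj
  refine ⟨(List.range K₀).map (fun t => p (t + 1)), by simp, ?_, ?_⟩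
  · simp only [List.mem_map, List.mem_range]
    rintro s ⟨t, ht, rfl⟩
    exact hpF (t + 1) (by omega) (by omega)
  · have : i :: (List.range K₀).map (fun t => p (t + 1)) ++ [j] = (List.range (K₀ + 2)).map p := by
      rw [List.range_succ, List.range_succ_eq_map]
      simp [hp0, hpK, Function.comp_def]
    rw [this]
    exact (List.isChain_map _).2 ((List.isChain_range _ _).2 fun t ht => hpM t (by omega))

open Classical in
noncomputable def connector (hprim : Primitive M F K₀) (i j : ℕ) : List ℕ :=
  if h : i ∈ BInf M ∧ j ∈ BInf M then (exists_connector hprim h.1 h.2).choose else []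

lemma connector_spec (hprim : Primitive M F K₀) {i j : ℕ} (hi : i ∈ BInf M) (hj : j ∈ BInf M) :
    (connector hprim i j).length = K₀ ∧ (∀ s ∈ connector hprim i j, s ∈ F) ∧
      (i :: connector hprim i j ++ [j]).IsChain (Transition M) := by
  rw [connector, dif_pos ⟨hi, hj⟩]
  exact (exists_connector hprim hi hj).choose_spec

end Connector

lemma apply_mem_of_isPrefix {x : ShiftSpace M} {l p : List ℕ} (hx : x.1 = cyclicSeq l)
    (hp : p <+: l) {s : ℕ} (hs : s < p.length) : x.1 s ∈ p := by
  rw [hx, cyclicSeq_apply_of_lt (hs.trans_le hp.length_le), ← hp.getElem hs]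
  exact List.getElem_mem hs

section Loop

variable {F : Set ℕ} {K₀ : ℕ} (hprim : Primitive M F K₀) (v : ShiftSpace M) (n : ℕ)

noncomputable def loopWord (y : ShiftSpace M) (a : ℕ) : List ℕ :=
  word y a ++ connector hprim (y.1 (a - 1)) (v.1 0) ++ word v n ++
    connector hprim (v.1 (n - 1)) (y.1 0)

lemma length_loopWord (y : ShiftSpace M) (a : ℕ) :
    (loopWord hprim v n y a).length = a + K₀ + n + K₀ := by
  simp [loopWord, (connector_spec hprim (symbol_mem_BInf _ _) (symbol_mem_BInf _ _)).1]; ring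

lemma isChain_loopWord {y : ShiftSpace M} {a : ℕ} (ha : 0 < a) (hn : 0 < n) :
    (loopWord hprim v n y a ++ (loopWord hprim v n y a).take 1).IsChain (Transition M) := by
  have htake : (loopWord hprim v n y a).take 1 = [y.1 0] := by
    obtain ⟨a, rfl⟩ := Nat.exists_eq_add_of_lt ha
    simp [loopWord, word, List.range_succ_eq_map, List.take_append]
  have hback : (word v n ++ connector hprim (v.1 (n - 1)) (y.1 0) ++ [y.1 0]).IsChain
      (Transition M) :=
    (isChain_word v n).append_bridge (getLast?_word v hn)
      (connector_spec hprim (symbol_mem_BInf _ _) (symbol_mem_BInf _ _)).2.2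
      (List.isChain_singleton _) rfl
  have h := (isChain_word y a).append_bridge (getLast?_word y ha)
      (connector_spec hprim (symbol_mem_BInf y (a - 1)) (symbol_mem_BInf v 0)).2.2 hback
      (by simp [List.head?_append, head?_word v hn])
  rw [htake]
  simpa [loopWord] using h

noncomputable def loopPt (y : ShiftSpace M) (a : ℕ) (ha : 0 < a) (hn : 0 < n) : ShiftSpace M :=
  ⟨cyclicSeq (loopWord hprim v n y a), inShift_cyclicSeq
    (List.ne_nil_of_length_pos (by rw [length_loopWord]; omega)) (isChain_loopWord hprim v n ha hn)⟩

variable {n}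

lemma loopPt_periodic (y : ShiftSpace M) {a : ℕ} (ha : 0 < a) (hn : 0 < n) :
    (shiftMap M)^[a + K₀ + n + K₀] (loopPt hprim v n y a ha hn) = loopPt hprim v n y a ha hn := by
  rw [← length_loopWord hprim v n y a]
  exact iterate_shiftMap_length_of_eq_cyclicSeq rfl

lemma agree_loopPt (y : ShiftSpace M) {a : ℕ} (ha : 0 < a) (hn : 0 < n) :
    Agree M a (loopPt hprim v n y a ha hn) y := by
  intro j hj
  have hj' : j < (loopWord hprim v n y a).length := by rw [length_loopWord]; omega
  show cyclicSeq _ j = _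
  rw [cyclicSeq_apply_of_lt hj']
  simp [loopWord, List.getElem_append_left, hj]

lemma loopPt_coe (y : ShiftSpace M) {a : ℕ} (ha : 0 < a) (hn : 0 < n) :
    (loopPt hprim v n y a ha hn).1 = cyclicSeq (loopWord hprim v n y a) := rfl

lemma iterate_loopPt_apply_mem (y : ShiftSpace M) {a : ℕ} (ha : 0 < a) (hn : 0 < n) {s : ℕ}
    (hs : s < K₀) :
    ((shiftMap M)^[a] (loopPt hprim v n y a ha hn)).1 s ∈ F ∧
      ((shiftMap M)^[a + K₀ + n] (loopPt hprim v n y a ha hn)).1 s ∈ F := by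
  set c₁ := connector hprim (y.1 (a - 1)) (v.1 0)
  set c₂ := connector hprim (v.1 (n - 1)) (y.1 0)
  have hc₁ := connector_spec hprim (symbol_mem_BInf y (a - 1)) (symbol_mem_BInf v 0)
  have hc₂ := connector_spec hprim (symbol_mem_BInf v (n - 1)) (symbol_mem_BInf y 0)
  have hrot₁ : (loopWord hprim v n y a).rotate a = c₁ ++ (word v n ++ c₂ ++ word y a) := by
    rw [List.rotate_eq_of_eq_append (l₁ := word y a) (l₂ := c₁ ++ word v n ++ c₂)
      (by simp [loopWord, c₁, c₂]) (length_word y a)]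
    simp
  have hrot₂ : (loopWord hprim v n y a).rotate (a + K₀ + n) = c₂ ++ (word y a ++ c₁ ++ word v n) :=
    List.rotate_eq_of_eq_append rfl (by simp [c₁, hc₁.1, add_assoc])
  exact ⟨hc₁.2.1 _ (apply_mem_of_isPrefix (hrot₁ ▸ iterate_shiftMap_coe_of_eq_cyclicSeq rfl a)
      (List.prefix_append _ _) (by simpa [c₁, hc₁.1] using hs)),
    hc₂.2.1 _ (apply_mem_of_isPrefix (hrot₂ ▸ iterate_shiftMap_coe_of_eq_cyclicSeq rfl _)
      (List.prefix_append _ _) (by simpa [c₂, hc₂.1] using hs))⟩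

lemma agree_iterate_loopPt_head (y : ShiftSpace M) (k : ℕ) (hn : 0 < n) :
    Agree M (n + K₀ + n) ((shiftMap M)^[k] (loopPt hprim v n y (k + n) (by omega) hn))
      (loopPt hprim v n ((shiftMap M)^[k] y) n hn hn) := by
  set x := (shiftMap M)^[k] y
  set c₁ := connector hprim (x.1 (n - 1)) (v.1 0)
  have hc₁ := connector_spec hprim (symbol_mem_BInf x (n - 1)) (symbol_mem_BInf v 0)
  have hlast : y.1 (k + n - 1) = x.1 (n - 1) := by
    rw [iterate_shiftMap_apply, show n - 1 + k = k + n - 1 by omega]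
  have hrot : (loopWord hprim v n y (k + n)).rotate k =
      (word x n ++ c₁ ++ word v n) ++ (connector hprim (v.1 (n - 1)) (y.1 0) ++ word y k) := by
    rw [List.rotate_eq_of_eq_append (l₁ := word y k)
      (l₂ := word x n ++ c₁ ++ word v n ++ connector hprim (v.1 (n - 1)) (y.1 0))
      (by simp [loopWord, word_add, hlast, c₁, x]) (length_word y k)]
    simp
  have h := agree_of_isPrefix (hrot ▸ iterate_shiftMap_coe_of_eq_cyclicSeq
    (loopPt_coe hprim v y (by omega) hn) k) (loopPt_coe hprim v x hn hn)
    (List.prefix_append _ _) (by rw [loopWord]; exact List.prefix_append _ _)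
  simpa [c₁, hc₁.1, add_assoc] using h

lemma agree_iterate_loopPt_tail (y : ShiftSpace M) {a : ℕ} (ha : n ≤ a) (hn : 0 < n) :
    Agree M (n + K₀ + n) ((shiftMap M)^[a + K₀] (loopPt hprim v n y a (by omega) hn))
      ((shiftMap M)^[n + K₀] (loopPt hprim v n y n hn hn)) := by
  set c₂ := connector hprim (v.1 (n - 1)) (y.1 0)
  have hc₂ := connector_spec hprim (symbol_mem_BInf v (n - 1)) (symbol_mem_BInf y 0)
  have hrot : ∀ b ≥ n, ∃ r, (loopWord hprim v n y b).rotate (b + K₀) =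
      (word v n ++ c₂ ++ word y n) ++ r := by
    intro b hb
    obtain ⟨d, rfl⟩ := Nat.exists_eq_add_of_le hb
    set c₁ := connector hprim (y.1 (n + d - 1)) (v.1 0)
    have hc₁ := connector_spec hprim (symbol_mem_BInf y (n + d - 1)) (symbol_mem_BInf v 0)
    refine ⟨word ((shiftMap M)^[n] y) d ++ c₁, ?_⟩
    rw [List.rotate_eq_of_eq_append (l₁ := word y (n + d) ++ c₁) (l₂ := word v n ++ c₂)
      (by simp [loopWord, c₁, c₂]) (by simp [c₁, hc₁.1])]
    simp [word_add]
  obtain ⟨r, hr⟩ := hrot a ha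
  obtain ⟨r', hr'⟩ := hrot n le_rfl
  have h := agree_of_isPrefix
    (hr ▸ iterate_shiftMap_coe_of_eq_cyclicSeq (loopPt_coe hprim v y (by omega) hn) (a + K₀))
    (hr' ▸ iterate_shiftMap_coe_of_eq_cyclicSeq (loopPt_coe hprim v y hn hn) (n + K₀))
    (List.prefix_append _ _) (List.prefix_append _ _)
  simpa [c₂, hc₂.1, add_assoc] using h

lemma loopPt_congr {y y' : ShiftSpace M} (h : Agree M n y y') (hn : 0 < n) :
    loopPt hprim v n y n hn hn = loopPt hprim v n y' n hn hn := by
  apply Subtype.ext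
  rw [loopPt_coe, loopPt_coe, loopWord, loopWord, word_congr h, h 0 hn, h (n - 1) (by omega)]

end Loop

lemma birkhoff_add (A : ShiftSpace M → ℝ) (k l : ℕ) (x : ShiftSpace M) :
    birkhoff M A (k + l) x = birkhoff M A k x + birkhoff M A l ((shiftMap M)^[k] x) := by
  simp only [birkhoff, Finset.sum_range_add, ← Function.iterate_add_apply, add_comm]

lemma birkhoff_congr {A : ShiftSpace M → ℝ} {n k : ℕ} (hA : ∀ x y, Agree M n x y → A x = A y)
    {x y : ShiftSpace M} (h : Agree M (k + n) x y) : birkhoff M A k x = birkhoff M A k y :=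
  Finset.sum_congr rfl fun t ht =>
    hA _ _ (Agree.iterate (h.mono (by have := Finset.mem_range.1 ht; omega)))

lemma mul_le_birkhoff {A : ShiftSpace M → ℝ} {F : Set ℕ} {m : ℝ}
    (hA : ∀ w : ShiftSpace M, w.1 0 ∈ F → m ≤ A w) {K : ℕ} {x : ShiftSpace M}
    (hx : ∀ s < K, x.1 s ∈ F) : K * m ≤ birkhoff M A K x := by
  calc (K : ℝ) * m = ∑ _t ∈ Finset.range K, m := by simp
    _ ≤ birkhoff M A K x := Finset.sum_le_sum fun t ht => hA _ (by
        rw [iterate_shiftMap_apply, zero_add]; exact hx t (Finset.mem_range.1 ht))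

lemma exists_agree_iterate_eq {k n : ℕ} (hn : 0 < n) {x x' y : ShiftSpace M}
    (hy : (shiftMap M)^[k] y = x) (h : Agree M n x x') :
    ∃ y', (shiftMap M)^[k] y' = x' ∧ Agree M (k + n) y y' := by
  have hyx : ∀ j, y.1 (j + k) = x.1 j := fun j => by rw [← hy, iterate_shiftMap_apply]
  set w : ℕ → ℕ := fun j => if j < k then y.1 j else x'.1 (j - k)
  have hw : InShift M w := by
    intro j
    rcases lt_trichotomy (j + 1) k with hj | hj | hj
    · simp only [w, if_pos hj, if_pos (show j < k by omega)]; exact y.2 j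
    · have hx'0 : x'.1 0 = y.1 (j + 1) := by rw [← h 0 hn, ← hyx, zero_add, hj]
      simp only [w, if_pos (show j < k by omega), if_neg (show ¬ j + 1 < k by omega),
        show j + 1 - k = 0 by omega, hx'0]
      exact y.2 j
    · simp only [w, if_neg (show ¬ j < k by omega), if_neg (show ¬ j + 1 < k by omega),
        show j + 1 - k = j - k + 1 by omega]
      exact x'.2 (j - k)
  refine ⟨⟨w, hw⟩, Subtype.ext (funext fun j => ?_), fun j hj => ?_⟩
  · rw [iterate_shiftMap_apply]; simp [w]
  · show y.1 j = w j
    by_cases hjk : j < k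
    · simp [w, hjk]
    · simp only [w, if_neg hjk]
      rw [← h (j - k) (by omega), ← hyx, Nat.sub_add_cancel (by omega)]

lemma integral_le_betaA {A : ShiftSpace M → ℝ} (hA : BddAbove (Set.range A))
    {μ : Measure (ShiftSpace M)} (hμ : InvProb M μ) (hi : Integrable A μ) :
    ∫ x, A x ∂μ ≤ betaA M A := by
  refine le_csSup ⟨sSup (Set.range A), ?_⟩ ⟨μ, hμ, hi, rfl⟩
  rintro _ ⟨ν, hν, hνi, rfl⟩
  have := hν.1
  calc ∫ x, A x ∂ν ≤ ∫ _, sSup (Set.range A) ∂ν :=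
        integral_mono hνi (integrable_const _) fun x => le_csSup hA ⟨x, rfl⟩
    _ = sSup (Set.range A) := by simp

lemma birkhoff_le_mul_betaA {A : ShiftSpace M → ℝ} (hA : BddAbove (Set.range A))
    {z : ShiftSpace M} {N : ℕ} (hN : 0 < N) (hz : (shiftMap M)^[N] z = z) :
    birkhoff M A N z ≤ N * betaA M A := by
  have h := integral_le_betaA hA
    ⟨isProbabilityMeasure_orbitMeasure _ _ hN.ne', map_orbitMeasure measurable_shiftMap hz⟩
    (integrable_orbitMeasure hN.ne' A)
  rwa [integral_orbitMeasure, inv_mul_le_iff₀ (by exact_mod_cast hN)] at h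

lemma exists_invProb_integrable {F : Set ℕ} {K₀ : ℕ} (hprim : Primitive M F K₀)
    (v : ShiftSpace M) : ∃ μ, InvProb M μ ∧ ∀ g : ShiftSpace M → ℝ, Integrable g μ := by
  have hz := loopPt_periodic hprim v v one_pos one_pos
  exact ⟨_, ⟨isProbabilityMeasure_orbitMeasure _ _ (by omega),
    map_orbitMeasure measurable_shiftMap hz⟩, integrable_orbitMeasure (by omega)⟩

lemma betaA_le_of_subaction {A : ShiftSpace M → ℝ}
    (hμ₀ : ∃ μ, InvProb M μ ∧ Integrable A μ) {f : ShiftSpace M → ℝ} (hf : Continuous f) {c : ℝ}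
    (hc : ∀ x, A x + f x - f (shiftMap M x) ≤ c) : betaA M A ≤ c := by
  obtain ⟨μ₀, hμ₀, hi₀⟩ := hμ₀
  refine csSup_le ⟨_, μ₀, hμ₀, hi₀, rfl⟩ ?_
  rintro _ ⟨μ, hμ, hi, rfl⟩
  have := hμ.1
  have h := integral_nonpos_of_le_coboundary (φ := fun x => A x - c) ⟨measurable_shiftMap, hμ.2⟩
    (hi.sub (integrable_const c)) hf.measurable fun x => by linarith [hc x]
  rw [integral_sub hi (integrable_const c)] at h
  simpa using h

lemma birkhoff_loop_bound {F : Set ℕ} {K₀ : ℕ} (hprim : Primitive M F K₀) (v : ShiftSpace M)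
    {n : ℕ} (hn : 0 < n) {B : ShiftSpace M → ℝ} (hB : ∀ x y, Agree M n x y → B x = B y)
    {m : ℝ} (hm : ∀ w : ShiftSpace M, w.1 0 ∈ F → m ≤ B w) {β : ℝ}
    (hper : ∀ z N, 0 < N → (shiftMap M)^[N] z = z → birkhoff M B N z ≤ N * β)
    (y : ShiftSpace M) (k : ℕ) :
    birkhoff M B k y + birkhoff M B n (loopPt hprim v n ((shiftMap M)^[k] y) n hn hn) +
      birkhoff M B n ((shiftMap M)^[n + K₀] (loopPt hprim v n y n hn hn)) + 2 * K₀ * m ≤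
      (k + 2 * n + 2 * K₀) * β := by
  set z := loopPt hprim v n y (k + n) (by omega) hn
  have hprefix : birkhoff M B k z = birkhoff M B k y :=
    birkhoff_congr hB (agree_loopPt hprim v y _ hn)
  have hxblock : birkhoff M B n ((shiftMap M)^[k] z) =
      birkhoff M B n (loopPt hprim v n ((shiftMap M)^[k] y) n hn hn) :=
    birkhoff_congr hB ((agree_iterate_loopPt_head hprim v y k hn).mono (by omega))
  have hconn₁ : K₀ * m ≤ birkhoff M B K₀ ((shiftMap M)^[k + n] z) :=
    mul_le_birkhoff hm fun s hs => (iterate_loopPt_apply_mem hprim v y _ hn hs).1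
  have hyblock : birkhoff M B n ((shiftMap M)^[k + n + K₀] z) =
      birkhoff M B n ((shiftMap M)^[n + K₀] (loopPt hprim v n y n hn hn)) :=
    birkhoff_congr hB ((agree_iterate_loopPt_tail hprim v y (by omega) hn).mono (by omega))
  have hconn₂ : K₀ * m ≤ birkhoff M B K₀ ((shiftMap M)^[k + n + K₀ + n] z) :=
    mul_le_birkhoff hm fun s hs => (iterate_loopPt_apply_mem hprim v y _ hn hs).2
  have hperiod := hper z _ (by omega) (loopPt_periodic hprim v y _ hn)
  rw [birkhoff_add, birkhoff_add, birkhoff_add, birkhoff_add, hprefix, hxblock, hyblock]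
    at hperiod
  push_cast at hperiod
  linarith

theorem exists_continuous_subaction_of_local {F : Set ℕ} {K₀ : ℕ} (hprim : Primitive M F K₀)
    (v : ShiftSpace M) {n : ℕ} (hn : 0 < n) {B : ShiftSpace M → ℝ}
    (hB : ∀ x y, Agree M n x y → B x = B y) {m : ℝ} (hm : ∀ w : ShiftSpace M, w.1 0 ∈ F → m ≤ B w)
    {β : ℝ} (hper : ∀ z N, 0 < N → (shiftMap M)^[N] z = z → birkhoff M B N z ≤ N * β) :
    ∃ f : ShiftSpace M → ℝ, Continuous f ∧ ∀ x, B x + f x - f (shiftMap M x) ≤ β := by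
  set G : ShiftSpace M → ℝ := fun x => B x - β
  set E : ShiftSpace M → ℝ := fun y =>
    birkhoff M B n ((shiftMap M)^[n + K₀] (loopPt hprim v n y n hn hn))
  have hG : ∀ k y, ∑ t ∈ Finset.range k, G ((shiftMap M)^[t] y) = birkhoff M B k y - k * β := by
    simp [G, birkhoff, Finset.sum_sub_distrib]
  have hbdd : ∀ x, BddAbove (preimageSums (shiftMap M) G E x) := fun x =>
    ⟨(2 * n + 2 * K₀) * β - birkhoff M B n (loopPt hprim v n x n hn hn) - 2 * K₀ * m, by
      rintro _ ⟨k, y, rfl, rfl⟩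
      rw [hG]
      linarith [birkhoff_loop_bound hprim v hn hB hm hper y k]⟩
  have hsub : ∀ x x', Agree M n x x' →
      preimageSums (shiftMap M) G E x ⊆ preimageSums (shiftMap M) G E x' := by
    rintro x x' hx _ ⟨k, y, hy, rfl⟩
    obtain ⟨y', hy', hyy'⟩ := exists_agree_iterate_eq hn hy hx
    have hE : E y = E y' := by
      simp only [E]; rw [loopPt_congr hprim v (hyy'.mono (by omega)) hn]
    exact ⟨k, y', hy', by rw [hG, hG, birkhoff_congr hB hyy', hE]⟩
  refine ⟨preimageSup (shiftMap M) G E, continuous_of_agree (n := n) fun x x' hx => ?_,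
    fun x => ?_⟩
  · exact congrArg sSup ((hsub x x' hx).antisymm (hsub x' x hx.symm))
  · linarith [add_preimageSup_le (shiftMap M) G E hbdd x]

lemma exists_local_approx {A : ShiftSpace M → ℝ}
    (hucont : ∀ ε : ℝ, 0 < ε → ∃ k : ℕ, ∀ x y : ShiftSpace M, Agree M k x y → |A x - A y| ≤ ε)
    (hbdd : BddAbove (Set.range A)) {ε : ℝ} (hε : 0 < ε) :
    ∃ n > 0, ∃ B : ShiftSpace M → ℝ, (∀ x y, Agree M n x y → B x = B y) ∧
      ∀ x, A x ≤ B x ∧ B x ≤ A x + ε := by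
  obtain ⟨k, hk⟩ := hucont ε hε
  refine ⟨k + 1, k.succ_pos, fun x => sSup (A '' {y | Agree M (k + 1) x y}), fun x y hxy => ?_,
    fun x => ⟨?_, ?_⟩⟩
  · dsimp only
    rw [show {w | Agree M (k + 1) x w} = {w | Agree M (k + 1) y w} from
      Set.ext fun w => ⟨hxy.symm.trans, hxy.trans⟩]
  · exact le_csSup (hbdd.mono (Set.image_subset_range _ _)) ⟨x, Agree.refl _ x, rfl⟩
  · refine csSup_le ⟨A x, x, Agree.refl _ x, rfl⟩ ?_
    rintro _ ⟨y, hy, rfl⟩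
    linarith [(abs_le.1 (hk x y (hy.mono k.le_succ))).1]

theorem exists_continuous_subaction {F : Set ℕ} {K₀ : ℕ} (hprim : Primitive M F K₀)
    (v : ShiftSpace M) {A : ShiftSpace M → ℝ}
    (hucont : ∀ ε : ℝ, 0 < ε → ∃ k : ℕ, ∀ x y : ShiftSpace M, Agree M k x y → |A x - A y| ≤ ε)
    (hbdd : BddAbove (Set.range A)) (hbelow : BddBelow (A '' FCyl M F)) {ε : ℝ} (hε : 0 < ε) :
    ∃ f : ShiftSpace M → ℝ, Continuous f ∧
      ∀ x, A x + f x - f (shiftMap M x) ≤ betaA M A + ε := by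
  obtain ⟨n, hn, B, hB, hAB⟩ := exists_local_approx hucont hbdd hε
  obtain ⟨m, hm⟩ := hbelow
  have hper : ∀ z N, 0 < N → (shiftMap M)^[N] z = z →
      birkhoff M B N z ≤ N * (betaA M A + ε) := fun z N hN hz =>
    calc birkhoff M B N z ≤ ∑ t ∈ Finset.range N, (A ((shiftMap M)^[t] z) + ε) :=
          Finset.sum_le_sum fun t _ => (hAB _).2
      _ = birkhoff M A N z + N * ε := by simp [birkhoff, Finset.sum_add_distrib]
      _ ≤ N * (betaA M A + ε) := by
          linarith [birkhoff_le_mul_betaA hbdd hN hz]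
  obtain ⟨f, hf, hfB⟩ := exists_continuous_subaction_of_local hprim v hn hB
    (fun w hw => (hm ⟨w, hw, rfl⟩).trans (hAB w).1) hper
  exact ⟨f, hf, fun x => by linarith [hfB x, (hAB x).1]⟩

lemma betaA_eq_zero_of_isEmpty [IsEmpty (ShiftSpace M)] (A : ShiftSpace M → ℝ) :
    betaA M A = 0 := by
  rw [betaA, ← Real.sSup_empty]
  congr
  refine Set.eq_empty_of_forall_notMem ?_
  rintro _ ⟨μ, hμ, -⟩
  exact @IsProbabilityMeasure.ne_zero _ _ μ hμ.1 (Measure.eq_zero_of_isEmpty μ)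

/-- For a primitive countable Markov shift and a uniformly continuous,
bounded above potential `A` with `inf A|_{⋃_{i∈F}[i]} > -∞`, the dual formula
`β_A = inf_{f ∈ C⁰(Σ)} sup_{x ∈ Σ} (A + f - f∘σ)(x)` holds (the value
`inf_f sup_x (A + f - f∘σ)` being expressed as the infimum of all constants `c` that,
for some continuous `f`, bound `A + f - f∘σ` from above). -/
theorem betaA_dual_formula
    (M : ℕ → ℕ → Bool) (F : Set ℕ) (K₀ : ℕ)
    (hprim : Primitive M F K₀)
    (A : ShiftSpace M → ℝ)
    (hucont : ∀ ε : ℝ, 0 < ε → ∃ k : ℕ, ∀ x y : ShiftSpace M, Agree M k x y → |A x - A y| ≤ ε)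
    (hbdd : BddAbove (Set.range A))
    (hbelow : BddBelow (A '' FCyl M F)) :
    betaA M A = sInf {c : ℝ | ∃ f : ShiftSpace M → ℝ, Continuous f ∧
      ∀ x : ShiftSpace M, A x + f x - f (shiftMap M x) ≤ c} := by
  rcases isEmpty_or_nonempty (ShiftSpace M) with hempty | ⟨⟨v⟩⟩
  · rw [betaA_eq_zero_of_isEmpty, eq_comm]
    convert Real.sInf_univ
    exact Set.eq_univ_of_forall fun _ => ⟨0, continuous_const, isEmptyElim⟩
  obtain ⟨μ, hμ, hi⟩ := exists_invProb_integrable hprim v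
  have hlower : ∀ c ∈ {c : ℝ | ∃ f : ShiftSpace M → ℝ, Continuous f ∧
      ∀ x : ShiftSpace M, A x + f x - f (shiftMap M x) ≤ c}, betaA M A ≤ c :=
    fun c ⟨f, hf, hc⟩ => betaA_le_of_subaction ⟨μ, hμ, hi A⟩ hf hc
  have hupper : ∀ ε > 0, ∃ f : ShiftSpace M → ℝ, Continuous f ∧
      ∀ x, A x + f x - f (shiftMap M x) ≤ betaA M A + ε :=
    fun ε hε => exists_continuous_subaction hprim v hucont hbdd hbelow hε
  exact le_antisymm (le_csInf ⟨_, hupper 1 one_pos⟩ hlower)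
    (le_of_forall_pos_le_add fun ε hε => csInf_le ⟨_, hlower⟩ (hupper ε hε))
end

section
/- Let (Σ,σ) be a primitive Markov subshift on a countable alphabet and let A : Σ → ℝ be a bounded above, locally Hölder continuous potential with inf A|_{⋃_{i∈F}[i]} > −∞. If u : Σ → ℝ₊ is a nonnegative continuous function with A + u − u∘σ ≤ β_A on Σ, then for every x ∈ Σ one has u(x) ≥ u_A(x), where u_A(x) = sup{S_k(A − β_A)(y) : k ≥ 0, y ∈ Σ, σ^k(y) = x}. -/
open MeasureTheory Filter Topology Set

/-- any nonnegative continuous sub-action `u` dominates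
`u_A(x) = sup {S_k(A - β_A)(y) : k ≥ 0, σ^k(y) = x}`. -/
theorem uA_minimal
    (M : ℕ → ℕ → Bool) (F : Set ℕ) (K₀ : ℕ) (lam H : ℝ)
    (hlam₀ : 0 < lam) (hlam₁ : lam < 1) (hH : 0 < H)
    (hprim : Primitive M F K₀)
    (A : ShiftSpace M → ℝ)
    (hbdd : BddAbove (Set.range A))
    (hbelow : BddBelow (A '' FCyl M F))
    (hhold : LocHolder M lam H A)
    (u : ShiftSpace M → ℝ) (hu : Continuous u) (hupos : ∀ x, 0 ≤ u x)
    (husub : ∀ x, A x + u x - u (shiftMap M x) ≤ betaA M A) :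
    ∀ x : ShiftSpace M, uA M A x ≤ u x := by
  have key : ∀ (k : ℕ) (y : ShiftSpace M),
      birkhoff M A k y - k * betaA M A ≤ u ((shiftMap M)^[k] y) - u y := by
    intro k
    induction k with
    | zero => intro y; simp [birkhoff]
    | succ k ih =>
      intro y
      have h1 : birkhoff M A (k + 1) y = A y + birkhoff M A k (shiftMap M y) := by
        simp only [birkhoff, Finset.sum_range_succ', Function.iterate_succ_apply,
          Function.iterate_zero_apply, add_comm]
      have h2 : A y ≤ betaA M A + u (shiftMap M y) - u y := by
        have := husub y; linarith
      have h3 := ih (shiftMap M y)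
      rw [Function.iterate_succ_apply]
      push_cast
      rw [h1]
      linarith
  intro x
  apply Real.sSup_le _ (hupos x)
  rintro r ⟨k, y, hy, rfl⟩
  have := key k y
  rw [hy] at this
  have := hupos y
  linarith
end
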